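/- Let X be a nonempty subset of a complete metric space (Y,d), let F be a multivalued mapping from X to Y, and let δ be a complete metric on the graph G = {(x,t) : x ∈ X, t ∈ F(x)} such that the function (x,t) ↦ d(x,t) is continuous on (G,δ). Assume that for each x ∈ X with x ∉ F(x) and each t ∈ F(x) there exist z ∈ X with z ≠ x and v ∈ F(z) satisfying δ((x,t),(z,v)) ≤ d(x,t) − d(z,v). Then F has a fixed point. -/

import Mathlib

/-!
On the complete space `(G, δ)` the function `φ (x, t) = d(x, t)` is continuous and nonnegative,
so Ekeland's variational principle (in Caristi's form) gives a point `(x, t)` of `G` such that no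
other `(z, v)` satisfies `δ((x, t), (z, v)) ≤ φ (x, t) - φ (z, v)`; by hypothesis, `x ∈ F x`.

The variational principle follows from a nested-sets argument: pick `u (n + 1)` in the Caristi set
of `u n` with `φ (u (n + 1))` within `1 / (n + 1)` of the infimum of `φ` there; the Caristi sets
of the `u n` are then closed, nested, and shrink to a point.
-/

open Metric Filter Set

section Caristi

variable {α : Type*}

/-- The points `q` lying below `p` in the Caristi (Brøndsted) order defined by `φ`. -/
def caristiSet [PseudoMetricSpace α] (φ : α → ℝ) (p : α) : Set α :=
  {q | dist p q ≤ φ p - φ q}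

section PseudoMetric

variable [PseudoMetricSpace α] {φ : α → ℝ} {p q : α}

theorem mem_caristiSet_self : p ∈ caristiSet φ p := by
  simp [caristiSet]

theorem caristiSet_subset (hq : q ∈ caristiSet φ p) : caristiSet φ q ⊆ caristiSet φ p :=
  fun r hr => calc
    dist p r ≤ dist p q + dist q r := dist_triangle p q r
    _ ≤ (φ p - φ q) + (φ q - φ r) := add_le_add hq hr
    _ = φ p - φ r := by ring

theorem isClosed_caristiSet (hφ : LowerSemicontinuous φ) (p : α) :
    IsClosed (caristiSet φ p) := by
  have hlsc : LowerSemicontinuous fun q => dist p q + φ q :=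
    (continuous_const.dist continuous_id).lowerSemicontinuous.add hφ
  convert hlsc.isClosed_preimage (φ p) using 1
  ext q
  exact le_sub_iff_add_le (a := dist p q)

theorem caristiSet_subset_closedBall {ε : ℝ} (hq : q ∈ caristiSet φ p)
    (hmin : ∀ r ∈ caristiSet φ p, φ q ≤ φ r + ε) : caristiSet φ q ⊆ closedBall q ε := by
  intro r hr
  have hrp : r ∈ caristiSet φ p := caristiSet_subset hq hr
  rw [mem_closedBall, dist_comm]
  linarith [show dist q r ≤ φ q - φ r from hr, hmin r hrp]

theorem exists_mem_caristiSet_subset_closedBall (hbdd : BddBelow (range φ)) (p : α)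
    {ε : ℝ} (hε : 0 < ε) : ∃ q ∈ caristiSet φ p, caristiSet φ q ⊆ closedBall q ε := by
  have hbdd' : BddBelow (φ '' caristiSet φ p) := hbdd.mono (image_subset_range _ _)
  obtain ⟨_, ⟨q, hq, rfl⟩, hlt⟩ := exists_lt_of_csInf_lt (s := φ '' caristiSet φ p)
    ⟨φ p, p, mem_caristiSet_self, rfl⟩ (lt_add_of_pos_right (sInf (φ '' caristiSet φ p)) hε)
  refine ⟨q, hq, caristiSet_subset_closedBall hq fun r hr => ?_⟩
  linarith [csInf_le hbdd' (mem_image_of_mem φ hr)]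

theorem exists_seq_caristiSet (hbdd : BddBelow (range φ)) (p₀ : α) :
    ∃ u : ℕ → α, u 0 = p₀ ∧ (∀ n : ℕ, u (n + 1) ∈ caristiSet φ (u n)) ∧
      ∀ n : ℕ, caristiSet φ (u (n + 1)) ⊆ closedBall (u (n + 1)) (1 / (n + 1)) := by
  choose f hf hball using fun (n : ℕ) (p : α) =>
    exists_mem_caristiSet_subset_closedBall hbdd p (Nat.one_div_pos_of_nat (n := n))
  exact ⟨fun n => Nat.rec p₀ f n, rfl, fun n => hf n _, fun n => hball n _⟩

end PseudoMetric

/-- Caristi's fixed point theorem in the form of Ekeland's variational principle. -/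
theorem exists_mem_caristiSet_forall_eq [MetricSpace α] [CompleteSpace α] {φ : α → ℝ}
    (hφ : LowerSemicontinuous φ) (hbdd : BddBelow (range φ)) (p₀ : α) :
    ∃ p ∈ caristiSet φ p₀, ∀ q ∈ caristiSet φ p, q = p := by
  obtain ⟨u, rfl, hstep, hball⟩ := exists_seq_caristiSet hbdd p₀
  have hchain : ∀ n m, n ≤ m → u m ∈ caristiSet φ (u n) := by
    intro n m hnm
    induction m, hnm using Nat.le_induction with
    | base => exact mem_caristiSet_self
    | succ m _ ih => exact caristiSet_subset ih (hstep m)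
  have hclose : ∀ n m, n + 1 ≤ m → dist (u m) (u (n + 1)) ≤ 1 / (n + 1) := fun n m hnm =>
    hball n (hchain (n + 1) m hnm)
  have hcauchy : CauchySeq u := by
    refine Metric.cauchySeq_iff'.2 fun ε hε => ?_
    obtain ⟨N, hN⟩ := exists_nat_one_div_lt hε
    exact ⟨N + 1, fun m hm => (hclose N m hm).trans_lt hN⟩
  obtain ⟨p, hp⟩ := cauchySeq_tendsto_of_complete hcauchy
  have hpmem : ∀ n, p ∈ caristiSet φ (u n) := fun n =>
    (isClosed_caristiSet hφ (u n)).mem_of_tendsto hp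
      (eventually_atTop.2 ⟨n, fun m hm => hchain n m hm⟩)
  refine ⟨p, hpmem 0, fun q hq => eq_of_forall_dist_le fun ε hε => ?_⟩
  obtain ⟨n, hn⟩ := exists_nat_one_div_lt (half_pos hε)
  have hqn : dist q (u (n + 1)) ≤ 1 / (n + 1) := hball n (caristiSet_subset (hpmem _) hq)
  have hpn : dist p (u (n + 1)) ≤ 1 / (n + 1) := hball n (hpmem _)
  linarith [dist_triangle_right q p (u (n + 1))]

end Caristi

/-- **Theorem 3.12.** Let `X` be a nonempty subset of a complete metric space `(Y,d)`,
`F` a multivalued mapping from `X` to `Y` (nonempty values), and `δ` a complete metric on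
the graph `G = {(x,t) : x ∈ X, t ∈ F(x)}` for which `(x,t) ↦ d(x,t)` is continuous. If
for each `x ∈ X` with `x ∉ F(x)` and each `t ∈ F(x)` there exist `z ∈ X`, `z ≠ x`, and
`v ∈ F(z)` with `δ((x,t),(z,v)) ≤ d(x,t) − d(z,v)`, then `F` has a fixed point. -/
theorem fixed_point_of_graph_metric_tool
    {Y : Type*} [MetricSpace Y] [CompleteSpace Y]
    (X : Set Y) (hX : X.Nonempty)
    (F : X → Set Y) (hFne : ∀ x, (F x).Nonempty)
    (mδ : MetricSpace {p : Y × Y // ∃ x : X, ∃ t ∈ F x, p = ((x : Y), t)})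
    (hcomplete : @CompleteSpace _ mδ.toUniformSpace)
    (hcont : @Continuous _ ℝ mδ.toUniformSpace.toTopologicalSpace _
      (fun p : {p : Y × Y // ∃ x : X, ∃ t ∈ F x, p = ((x : Y), t)} =>
        dist (p : Y × Y).1 (p : Y × Y).2))
    (hcond : ∀ x : X, (x : Y) ∉ F x → ∀ t : Y, ∀ ht : t ∈ F x,
      ∃ z : X, z ≠ x ∧ ∃ v : Y, ∃ hv : v ∈ F z,
        mδ.dist ⟨((x : Y), t), ⟨x, t, ht, rfl⟩⟩ ⟨((z : Y), v), ⟨z, v, hv, rfl⟩⟩ ≤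
          dist (x : Y) t - dist (z : Y) v) :
    ∃ x : X, (x : Y) ∈ F x := by
  obtain ⟨x₀, hx₀⟩ := hX
  obtain ⟨t₀, ht₀⟩ := hFne ⟨x₀, hx₀⟩
  -- `mδ` is passed explicitly: instance search would find the subspace metric of `Y × Y`.
  obtain ⟨⟨_, x, t, ht, rfl⟩, -, hmin⟩ := @exists_mem_caristiSet_forall_eq _ mδ hcomplete _
    (@Continuous.lowerSemicontinuous _ mδ.toUniformSpace.toTopologicalSpace _ _ _ _ _ hcont)
    ⟨0, forall_mem_range.2 fun _ => dist_nonneg⟩ ⟨((x₀ : Y), t₀), ⟨x₀, hx₀⟩, t₀, ht₀, rfl⟩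
  by_contra! hfix
  obtain ⟨z, hzx, v, hv, hδ⟩ := hcond x (hfix x) t ht
  have hzv := congrArg (fun p => p.1.1) (hmin ⟨((z : Y), v), z, v, hv, rfl⟩ hδ)
  exact hzx (Subtype.ext hzv)
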